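/- Define the integral operator T : L²([-1,1]) → L²([-1,1]) by T[f](s) = √2·α·∫_{-(1-|s|)}^{1-|s|} f(t) dt, where 0 < α. Then for each k = 0, 1, 2, ..., the function g_k(s) = cos((π/2)(2k+1)s) is an eigenfunction of T with eigenvalue (-1)^k·4√2·α/(π(2k+1)), and the family {g_k} is orthonormal up to normalization: ∫_{-1}^1 g_k(s)·g_{k'}(s) ds = 𝟙[k = k']. -/
import Mathlib

open Real

/-- `g_k(s) = cos((π/2)(2k+1)s)`. -/
noncomputable def gEig (k : ℕ) (s : ℝ) : ℝ :=
  Real.cos (Real.pi / 2 * (2 * (k : ℝ) + 1) * s)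

lemma intcos (c a b : ℝ) (hc : c ≠ 0) :
    ∫ t in a..b, Real.cos (c * t) = (Real.sin (c * b) - Real.sin (c * a)) / c := by
  rw [show (∫ t in a..b, Real.cos (c * t)) = c⁻¹ • ∫ x in c*a..c*b, Real.cos x from
      intervalIntegral.integral_comp_mul_left (fun x => Real.cos x) hc,
    integral_cos, smul_eq_mul]
  field_simp

lemma sin_c (k : ℕ) : Real.sin (Real.pi / 2 * (2 * (k : ℝ) + 1)) = (-1) ^ k := by
  have : Real.pi / 2 * (2 * (k : ℝ) + 1) = (k : ℝ) * Real.pi + Real.pi / 2 := by ring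
  rw [this, Real.sin_add, Real.sin_nat_mul_pi, Real.sin_pi_div_two, Real.cos_pi_div_two]
  have := Real.cos_nat_mul_pi_sub 0 k
  simpa using this

lemma cos_c (k : ℕ) : Real.cos (Real.pi / 2 * (2 * (k : ℝ) + 1)) = 0 := by
  have : Real.pi / 2 * (2 * (k : ℝ) + 1) = (k : ℝ) * Real.pi + Real.pi / 2 := by ring
  rw [this, Real.cos_add, Real.sin_nat_mul_pi, Real.sin_pi_div_two, Real.cos_pi_div_two]
  ring

/-- For the integral operator `T[f](s) = √2·α·∫_{-(1-|s|)}^{1-|s|} f(t) dt` on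
`L²([-1,1])` (`α > 0`), each `g_k` is an eigenfunction with eigenvalue
`(-1)^k·4√2·α/(π(2k+1))`, and the family `{g_k}` is orthonormal:
`∫_{-1}^1 g_k g_{k'} = 𝟙[k = k']`. -/
theorem stmt6 (α : ℝ) (hα : 0 < α) (k k' : ℕ) :
    (∀ s : ℝ, s ∈ Set.Icc (-1 : ℝ) 1 →
      Real.sqrt 2 * α * ∫ t in (-(1 - |s|))..(1 - |s|), gEig k t
        = ((-1 : ℝ) ^ k * 4 * Real.sqrt 2 * α / (Real.pi * (2 * (k : ℝ) + 1)))
            * gEig k s) ∧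
    (∫ s in (-1 : ℝ)..1, gEig k s * gEig k' s) = if k = k' then 1 else 0 := by
  have hπ := Real.pi_pos
  have hk1 : (0:ℝ) < 2 * (k : ℝ) + 1 := by positivity
  constructor
  · intro s _
    set c : ℝ := Real.pi / 2 * (2 * (k : ℝ) + 1) with hcdef
    have hc : (0:ℝ) < c := by positivity
    unfold gEig
    rw [intcos c _ _ hc.ne']
    have h1 : c * (1 - |s|) = c - c * |s| := by ring
    have h2 : Real.sin (c * (1 - |s|)) = (-1) ^ k * Real.cos (c * s) := by
      rw [h1, Real.sin_sub, hcdef, sin_c, cos_c, ← hcdef]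
      have : c * |s| = |c * s| := by
        rw [abs_mul, abs_of_nonneg hc.le]
      rw [this, Real.cos_abs]
      ring
    have h3 : Real.sin (c * -(1 - |s|)) = -((-1) ^ k * Real.cos (c * s)) := by
      rw [show c * -(1 - |s|) = -(c * (1 - |s|)) by ring, Real.sin_neg, h2]
    rw [h2, h3]
    rw [hcdef]
    field_simp
    ring
  · set a : ℝ := Real.pi / 2 * (2 * (k : ℝ) + 1) with ha
    set b : ℝ := Real.pi / 2 * (2 * (k' : ℝ) + 1) with hb
    have key : ∀ s : ℝ, gEig k s * gEig k' s
        = (Real.cos ((a - b) * s) + Real.cos ((a + b) * s)) / 2 := by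
      intro s
      unfold gEig
      rw [show (a - b) * s = a * s - b * s by ring, show (a + b) * s = a * s + b * s by ring,
        Real.cos_sub, Real.cos_add]
      ring
    rw [intervalIntegral.integral_congr (fun s _ => key s)]
    have hab : a + b = ((k : ℝ) + k' + 1) * Real.pi := by rw [ha, hb]; ring
    have hint : ∀ s : ℝ, ∀ _ : s ∈ Set.uIcc (-1:ℝ) 1, True := fun _ _ => trivial
    have i1 : IntervalIntegrable (fun s => Real.cos ((a - b) * s)) MeasureTheory.volume (-1) 1 :=
      (Real.continuous_cos.comp (continuous_const.mul continuous_id)).intervalIntegrable _ _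
    have i2 : IntervalIntegrable (fun s => Real.cos ((a + b) * s)) MeasureTheory.volume (-1) 1 :=
      (Real.continuous_cos.comp (continuous_const.mul continuous_id)).intervalIntegrable _ _
    have hsplit : (∫ s in (-1:ℝ)..1, (Real.cos ((a - b) * s) + Real.cos ((a + b) * s)) / 2)
        = ((∫ s in (-1:ℝ)..1, Real.cos ((a - b) * s))
          + ∫ s in (-1:ℝ)..1, Real.cos ((a + b) * s)) / 2 := by
      simp_rw [div_eq_mul_inv]
      rw [intervalIntegral.integral_mul_const, intervalIntegral.integral_add i1 i2]
    rw [hsplit]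
    have habne : a + b ≠ 0 := by rw [hab]; positivity
    have e2 : (∫ s in (-1:ℝ)..1, Real.cos ((a + b) * s)) = 0 := by
      rw [intcos _ _ _ habne, hab]
      have h0 : Real.sin (((k : ℝ) + k' + 1) * Real.pi * 1) = 0 := by
        rw [mul_one, show ((k : ℝ) + k' + 1) = ((k + k' + 1 : ℕ) : ℝ) by push_cast; ring,
          Real.sin_nat_mul_pi]
      have h0' : Real.sin (((k : ℝ) + k' + 1) * Real.pi * -1) = 0 := by
        rw [show ((k : ℝ) + k' + 1) * Real.pi * -1 = -(((k : ℝ) + k' + 1) * Real.pi * 1) by ring,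
          Real.sin_neg, h0, neg_zero]
      rw [h0, h0']
      simp
    rw [e2, add_zero]
    by_cases hkk : k = k'
    · subst hkk
      simp only [if_pos rfl]
      have : a - b = 0 := by rw [ha, hb]; ring
      rw [this]
      simp
    · rw [if_neg hkk]
      set m : ℤ := (k : ℤ) - k' with hm
      have hmne : m ≠ 0 := sub_ne_zero.mpr (by exact_mod_cast hkk)
      have hab2 : a - b = (m : ℝ) * Real.pi := by rw [ha, hb, hm]; push_cast; ring
      have habne2 : a - b ≠ 0 :=
        hab2 ▸ mul_ne_zero (Int.cast_ne_zero.mpr hmne) hπ.ne'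
      rw [intcos _ _ _ habne2, hab2]
      have hs1 : Real.sin ((m : ℝ) * Real.pi * 1) = 0 := by
        rw [mul_one, Real.sin_int_mul_pi]
      have hs2 : Real.sin ((m : ℝ) * Real.pi * -1) = 0 := by
        rw [show (m : ℝ) * Real.pi * -1 = -((m : ℝ) * Real.pi) by ring,
          Real.sin_neg, Real.sin_int_mul_pi, neg_zero]
      rw [hs1, hs2]
      simp
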